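/- arXiv:2204.07866 — 4 statements merged into one kernel-verified Lean document; each statement's English description precedes it below -/
import Mathlib

section
/- Suppose X : [0, 1/2] → ℝ and B : [0, 1/2] → ℝ are continuous functions with B_0 = 0 and X_0 = a for some a ∈ [0,1), such that X_t = a − ∫_0^t 1/(2 X_s) ds + B_t whenever X_s > 0 for all s ≤ t. If sup_{t ∈ [0,1/2]} B_t < 1 − a and B_{1/2} ≤ −a, then there exists t ∈ [0, 1/2] with X_t = 0. -/
open Set

/-!
If `X` never vanished on `[0, 1/2]`, then, being continuous with `X 0 = a ≥ 0`, it would stay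
positive there by the intermediate value theorem. The integral equation then holds up to `1/2`,
and since the drift `-∫ 1/(2X)` is nonpositive, `X (1/2) ≤ a + B (1/2) ≤ 0`, a contradiction.
-/

theorem pos_of_continuousOn_Icc_of_ne_zero {f : ℝ → ℝ} {a b : ℝ}
    (hf : ContinuousOn f (Icc a b)) (hfa : 0 ≤ f a) (hne : ∀ t ∈ Icc a b, f t ≠ 0) :
    ∀ t ∈ Icc a b, 0 < f t := by
  intro t ht
  by_contra! hft
  have hab : a ∈ Icc a b := left_mem_Icc.2 (ht.1.trans ht.2)
  obtain ⟨s, hs, hfs⟩ := isPreconnected_Icc.intermediate_value ht hab hf ⟨hft, hfa⟩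
  exact hne s hs hfs

theorem stmt4_general (X B : ℝ → ℝ)
    (hX : ContinuousOn X (Icc 0 (1/2)))
    (a : ℝ) (ha : a ∈ Ico (0:ℝ) 1) (hX0 : X 0 = a)
    (heq : ∀ t ∈ Icc (0:ℝ) (1/2), (∀ s ∈ Icc (0:ℝ) t, 0 < X s) →
      X t = a - (∫ s in (0:ℝ)..t, 1 / (2 * X s)) + B t)
    (hBhalf : B (1/2) ≤ -a) :
    ∃ t ∈ Icc (0:ℝ) (1/2), X t = 0 := by
  by_contra! hne
  have hpos := pos_of_continuousOn_Icc_of_ne_zero hX (hX0 ▸ ha.1) hne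
  have hhalf : (1/2 : ℝ) ∈ Icc (0:ℝ) (1/2) := by norm_num
  have hdrift : 0 ≤ ∫ s in (0:ℝ)..(1/2), 1 / (2 * X s) :=
    intervalIntegral.integral_nonneg (by norm_num) fun s hs => by
      have := hpos s hs
      positivity
  have hXhalf := heq (1/2) hhalf hpos
  linarith [hpos (1/2) hhalf]

/-- Deterministic statement: if `X` solves `X t = a - ∫₀ᵗ 1/(2 Xₛ) ds + B t`
as long as it stays positive, starts at `a ∈ [0, 1)`, the driving path
satisfies `sup_{[0,1/2]} B < 1 - a` and `B (1/2) ≤ -a`, then `X` hits `0`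
on `[0, 1/2]`. -/
theorem stmt4 (X B : ℝ → ℝ)
    (hX : ContinuousOn X (Icc 0 (1/2)))
    (hB : ContinuousOn B (Icc 0 (1/2))) (hB0 : B 0 = 0)
    (a : ℝ) (ha : a ∈ Ico (0:ℝ) 1) (hX0 : X 0 = a)
    (heq : ∀ t ∈ Icc (0:ℝ) (1/2), (∀ s ∈ Icc (0:ℝ) t, 0 < X s) →
      X t = a - (∫ s in (0:ℝ)..t, 1 / (2 * X s)) + B t)
    (hBsup : ∀ t ∈ Icc (0:ℝ) (1/2), B t < 1 - a)
    (hBhalf : B (1/2) ≤ -a) :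
    ∃ t ∈ Icc (0:ℝ) (1/2), X t = 0 :=
  stmt4_general X B hX a ha hX0 heq hBhalf
end

section
/- Let ε ∈ (0, 1/6) and let B : [0,1] → ℝ be continuous with sup_{s ∈ [0,1]} |B_s| < ε. Suppose X : [0,1] → ℝ is continuous, nonnegative, with X_0 = 0, satisfying X_t = ∫_0^t 1_{X_s > 0} ((1 − X_s)/(1 − s) + 1/X_s) ds + B_t for all t ∈ [0,1). Then sup_{t ∈ [0,1]} X_t < 2. -/
/-!
The drift `(1 - x)/(1 - s) + 1/x` is nonpositive once `x ≥ 5/3` (for `s < 1`), so above the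
level `5/3` the path can only move through the noise `B`. Comparing `X t` with `X` at the last
time `u ≤ t` at which `X u ≤ 5/3` gives `X t ≤ X u - B u + B t < 5/3 + 2ε < 2` for `t < 1`,
and continuity carries the bound to `t = 1`.
-/

open Set MeasureTheory

lemma ContinuousOn.exists_last_le {X : ℝ → ℝ} {a b c : ℝ} (hab : a ≤ b)
    (hX : ContinuousOn X (Icc a b)) (ha : X a ≤ c) :
    ∃ u ∈ Icc a b, X u ≤ c ∧ ∀ s ∈ Ioc u b, c < X s := by
  have hclosed : IsClosed (Icc a b ∩ X ⁻¹' Iic c) :=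
    hX.preimage_isClosed_of_isClosed isClosed_Icc isClosed_Iic
  obtain ⟨u, ⟨hu, hXu⟩, hmax⟩ :=
    (isCompact_Icc.of_isClosed_subset hclosed inter_subset_left).exists_isGreatest
      ⟨a, ⟨left_mem_Icc.2 hab, ha⟩⟩
  refine ⟨u, hu, hXu, fun s hs => lt_of_not_ge fun hXs => ?_⟩
  exact (hs.1.trans_le (hmax ⟨⟨hu.1.trans hs.1.le, hs.2⟩, hXs⟩)).false

lemma intervalIntegral_le_of_nonpos_on_Ioc {f : ℝ → ℝ} {a u t : ℝ} (hau : a ≤ u) (hut : u ≤ t)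
    (hf : IntegrableOn f (Icc a t)) (hneg : ∀ s ∈ Ioc u t, f s ≤ 0) :
    ∫ s in a..t, f s ≤ ∫ s in a..u, f s := by
  have hI₁ : IntervalIntegrable f volume a u :=
    (hf.mono_set (by rw [uIcc_of_le hau]; exact Icc_subset_Icc le_rfl hut)).intervalIntegrable
  have hI₂ : IntervalIntegrable f volume u t :=
    (hf.mono_set (by rw [uIcc_of_le hut]; exact Icc_subset_Icc hau le_rfl)).intervalIntegrable
  rw [← intervalIntegral.integral_add_adjacent_intervals hI₁ hI₂, add_le_iff_nonpos_right,
    intervalIntegral.integral_of_le hut]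
  exact setIntegral_nonpos measurableSet_Ioc hneg

lemma le_add_two_mul_of_eq_integral_add {X B f : ℝ → ℝ} {c ε t : ℝ} (ht : 0 ≤ t)
    (hX : ContinuousOn X (Icc 0 t)) (hX0 : X 0 ≤ c) (hf : IntegrableOn f (Icc 0 t))
    (hdrift : ∀ s ∈ Icc 0 t, c < X s → f s ≤ 0) (hB : ∀ s ∈ Icc 0 t, |B s| < ε)
    (heq : ∀ s ∈ Icc 0 t, X s = (∫ r in (0:ℝ)..s, f r) + B s) :
    X t ≤ c + 2 * ε := by
  obtain ⟨u, hu, hXu, habove⟩ := hX.exists_last_le ht hX0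
  have hint : ∫ r in (0:ℝ)..t, f r ≤ ∫ r in (0:ℝ)..u, f r :=
    intervalIntegral_le_of_nonpos_on_Ioc hu.1 hu.2 hf fun s hs =>
      hdrift s ⟨hu.1.trans hs.1.le, hs.2⟩ (habove s hs)
  have hBt := abs_lt.1 (hB t (right_mem_Icc.2 ht))
  have hBu := abs_lt.1 (hB u hu)
  have hXt := heq t (right_mem_Icc.2 ht)
  have hXu' := heq u hu
  linarith

lemma bessel_bridge_drift_nonpos {s x : ℝ} (hs₀ : 0 ≤ s) (hs₁ : s < 1) (hx : 5 / 3 ≤ x) :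
    (1 - x) / (1 - s) + 1 / x ≤ 0 := by
  have hpos : 0 < x := by linarith
  have h₁ : (1 - x) / (1 - s) ≤ 1 - x := by
    rw [div_le_iff₀ (by linarith)]
    nlinarith [mul_nonneg hs₀ (by linarith : (0:ℝ) ≤ x - 1)]
  have h₂ : 1 / x ≤ 3 / 5 := by
    rw [div_le_iff₀ hpos]
    linarith
  linarith

theorem stmt5_general (ε : ℝ) (hε : ε ∈ Ioo (0:ℝ) (1/6)) (B X : ℝ → ℝ)
    (hBsmall : ∀ s ∈ Icc (0:ℝ) 1, |B s| < ε)
    (hX : ContinuousOn X (Icc 0 1)) (hX0 : X 0 = 0)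
    (hint : ∀ t ∈ Ico (0:ℝ) 1,
      IntegrableOn
        (fun s => Set.indicator {s : ℝ | 0 < X s}
          (fun s => (1 - X s) / (1 - s) + 1 / X s) s) (Icc 0 t))
    (heq : ∀ t ∈ Ico (0:ℝ) 1,
      X t = (∫ s in (0:ℝ)..t,
        Set.indicator {s : ℝ | 0 < X s}
          (fun s => (1 - X s) / (1 - s) + 1 / X s) s) + B t) :
    ∀ t ∈ Icc (0:ℝ) 1, X t < 2 := by
  have hbound : ∀ t ∈ Ico (0:ℝ) 1, X t ≤ 5 / 3 + 2 * ε := by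
    intro t ⟨ht₀, ht₁⟩
    have hsub : Icc 0 t ⊆ Icc (0:ℝ) 1 := Icc_subset_Icc le_rfl ht₁.le
    refine le_add_two_mul_of_eq_integral_add ht₀ (hX.mono hsub) (by norm_num [hX0])
      (hint t ⟨ht₀, ht₁⟩) (fun s hs hXs => ?_) (fun s hs => hBsmall s (hsub hs))
      (fun s hs => heq s ⟨hs.1, hs.2.trans_lt ht₁⟩)
    rw [indicator_of_mem (show s ∈ {s | 0 < X s} from (by linarith : 0 < X s))]
    exact bessel_bridge_drift_nonpos hs.1 (hs.2.trans_lt ht₁) hXs.le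
  have hbound₁ : X 1 ≤ 5 / 3 + 2 * ε :=
    ContinuousWithinAt.closure_le (by simp) ((hX 1 (by simp)).mono Ico_subset_Icc_self)
      continuousWithinAt_const hbound
  intro t ⟨ht₀, ht₁⟩
  rcases ht₁.lt_or_eq with ht₁ | rfl
  · linarith [hbound t ⟨ht₀, ht₁⟩, hε.2]
  · linarith [hε.2]

/-- A continuous nonnegative path solving the Bessel-bridge equation from `0`
to `1` on `[0,1)`, driven by a path `B` with `sup |B| < ε < 1/6`, stays
strictly below `2` on all of `[0,1]`. -/
theorem stmt5 (ε : ℝ) (hε : ε ∈ Ioo (0:ℝ) (1/6)) (B X : ℝ → ℝ)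
    (hB : ContinuousOn B (Icc 0 1)) (hB0 : B 0 = 0)
    (hBsmall : ∀ s ∈ Icc (0:ℝ) 1, |B s| < ε)
    (hX : ContinuousOn X (Icc 0 1)) (hX0 : X 0 = 0)
    (hXnonneg : ∀ t ∈ Icc (0:ℝ) 1, 0 ≤ X t)
    (hint : ∀ t ∈ Ico (0:ℝ) 1,
      IntegrableOn
        (fun s => Set.indicator {s : ℝ | 0 < X s}
          (fun s => (1 - X s) / (1 - s) + 1 / X s) s) (Icc 0 t))
    (heq : ∀ t ∈ Ico (0:ℝ) 1,
      X t = (∫ s in (0:ℝ)..t,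
        Set.indicator {s : ℝ | 0 < X s}
          (fun s => (1 - X s) / (1 - s) + 1 / X s) s) + B t) :
    ∀ t ∈ Icc (0:ℝ) 1, X t < 2 :=
  stmt5_general ε hε B X hBsmall hX hX0 hint heq
end

section
/- Let B : [0,1] → ℝ be continuous with B_0 = 0 and let x_0 > 0. Any two continuous functions X, Y : [0,1] → ℝ with X_0 = Y_0 = x_0 that remain strictly positive and satisfy Z_t = x_0 + ∫_0^t 1/Z_s ds + B_t for all t ∈ [0,1] (Z ∈ {X, Y}) are equal. Moreover, such a strictly positive solution, if it exists, satisfies X_t ≥ x_0 + B_t for all t. -/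
/-!
The difference `D = X - Y` satisfies `D t = ∫₀ᵗ (1/X - 1/Y)`, and since `z ↦ 1/z` is decreasing on
`(0, ∞)`, `D · (1/X - 1/Y) ≤ 0`. Hence `D²` is nonincreasing, starting from `D² 0 = 0`, so `D = 0`.
The lower bound holds because the integral of the positive function `1/X` is nonnegative.
-/

open Set

theorem AntitoneOn.sub_mul_sub_nonpos {R : Type*} [Ring R] [LinearOrder R] [IsOrderedRing R]
    {f : R → R} {s : Set R} (hf : AntitoneOn f s) {x y : R} (hx : x ∈ s) (hy : y ∈ s) :
    (x - y) * (f x - f y) ≤ 0 := by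
  rcases le_total x y with h | h
  · exact mul_nonpos_of_nonpos_of_nonneg (sub_nonpos.2 h) (sub_nonneg.2 (hf hx hy h))
  · exact mul_nonpos_of_nonneg_of_nonpos (sub_nonneg.2 h) (sub_nonpos.2 (hf hy hx h))

theorem eqOn_zero_of_hasDerivAt_of_mul_nonpos {F f : ℝ → ℝ} {a b : ℝ}
    (hFc : ContinuousOn F (Icc a b)) (hF : ∀ t ∈ Ioo a b, HasDerivAt F (f t) t)
    (hsign : ∀ t ∈ Ioo a b, F t * f t ≤ 0) (ha : F a = 0) : EqOn F 0 (Icc a b) := by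
  have hanti : AntitoneOn (fun t => F t ^ 2) (Icc a b) := by
    refine antitoneOn_of_deriv_nonpos (convex_Icc a b) (hFc.pow 2) ?_ ?_ <;>
      rw [interior_Icc]
    · exact fun t ht => ((hF t ht).pow 2).differentiableAt.differentiableWithinAt
    · intro t ht
      have hd : HasDerivAt (fun s => F s ^ 2) (2 * F t ^ (2 - 1) * f t) t := (hF t ht).pow 2
      rw [hd.deriv]
      linarith [hsign t ht, show 2 * F t ^ (2 - 1) * f t = 2 * (F t * f t) by ring]
  intro t ht
  have hle : F t ^ 2 ≤ F a ^ 2 := hanti (left_mem_Icc.2 (ht.1.trans ht.2)) ht ht.1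
  rw [ha] at hle
  exact pow_eq_zero_iff two_ne_zero |>.1 (le_antisymm (by simpa using hle) (sq_nonneg _))

theorem eqOn_zero_of_eq_integral_of_mul_nonpos {D f : ℝ → ℝ} {a b : ℝ}
    (hf : ContinuousOn f (Icc a b)) (hD : ∀ t ∈ Icc a b, D t = ∫ s in a..t, f s)
    (hsign : ∀ t ∈ Icc a b, D t * f t ≤ 0) : EqOn D 0 (Icc a b) := by
  rcases lt_or_ge b a with hba | hab
  · simp [Icc_eq_empty_of_lt hba]
  set F : ℝ → ℝ := fun t => ∫ s in a..t, f s
  have hFc : ContinuousOn F (Icc a b) := by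
    have := intervalIntegral.continuousOn_primitive_interval (a := a) (b := b)
      (μ := MeasureTheory.volume) (f := f) (by rw [uIcc_of_le hab]; exact hf.integrableOn_Icc)
    rwa [uIcc_of_le hab] at this
  have hF : ∀ t ∈ Ioo a b, HasDerivAt F (f t) t := fun t ht =>
    intervalIntegral.integral_hasDerivAt_right
      ((hf.mono (Icc_subset_Icc le_rfl ht.2.le)).intervalIntegrable_of_Icc ht.1.le)
      ((hf.mono Ioo_subset_Icc_self).stronglyMeasurableAtFilter isOpen_Ioo t ht)
      (hf.continuousAt (Icc_mem_nhds ht.1 ht.2))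
  have hFD : EqOn F D (Icc a b) := fun t ht => (hD t ht).symm
  intro t ht
  rw [← hFD ht]
  refine eqOn_zero_of_hasDerivAt_of_mul_nonpos hFc hF (fun s hs => ?_) intervalIntegral.integral_same ht
  rw [hFD (Ioo_subset_Icc_self hs)]
  exact hsign s (Ioo_subset_Icc_self hs)

theorem stmt11_general (B : ℝ → ℝ) (x₀ : ℝ) (X Y : ℝ → ℝ)
    (hXc : ContinuousOn X (Icc 0 1)) (hYc : ContinuousOn Y (Icc 0 1))
    (hXpos : ∀ t ∈ Icc (0:ℝ) 1, 0 < X t)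
    (hYpos : ∀ t ∈ Icc (0:ℝ) 1, 0 < Y t)
    (hXeq : ∀ t ∈ Icc (0:ℝ) 1, X t = x₀ + (∫ s in (0:ℝ)..t, 1 / X s) + B t)
    (hYeq : ∀ t ∈ Icc (0:ℝ) 1, Y t = x₀ + (∫ s in (0:ℝ)..t, 1 / Y s) + B t) :
    (∀ t ∈ Icc (0:ℝ) 1, X t = Y t) ∧
    (∀ t ∈ Icc (0:ℝ) 1, x₀ + B t ≤ X t) := by
  have hXinv : ContinuousOn (fun s => 1 / X s) (Icc 0 1) :=
    continuousOn_const.div hXc fun s hs => (hXpos s hs).ne'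
  have hYinv : ContinuousOn (fun s => 1 / Y s) (Icc 0 1) :=
    continuousOn_const.div hYc fun s hs => (hYpos s hs).ne'
  have hint {g : ℝ → ℝ} (hg : ContinuousOn g (Icc 0 1)) {t : ℝ} (ht : t ∈ Icc (0:ℝ) 1) :
      IntervalIntegrable g MeasureTheory.volume 0 t :=
    (hg.mono (Icc_subset_Icc le_rfl ht.2)).intervalIntegrable_of_Icc ht.1
  have hdiff : ∀ t ∈ Icc (0:ℝ) 1, X t - Y t = ∫ s in (0:ℝ)..t, (1 / X s - 1 / Y s) := by
    intro t ht
    rw [intervalIntegral.integral_sub (hint hXinv ht) (hint hYinv ht), hXeq t ht, hYeq t ht]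
    ring
  have hsign : ∀ t ∈ Icc (0:ℝ) 1, (X t - Y t) * (1 / X t - 1 / Y t) ≤ 0 := fun t ht => by
    simpa only [one_div] using inv_antitoneOn_Ioi.sub_mul_sub_nonpos (hXpos t ht) (hYpos t ht)
  refine ⟨fun t ht => sub_eq_zero.1
    (eqOn_zero_of_eq_integral_of_mul_nonpos (hXinv.sub hYinv) hdiff hsign ht), fun t ht => ?_⟩
  have hnonneg : 0 ≤ ∫ s in (0:ℝ)..t, 1 / X s :=
    intervalIntegral.integral_nonneg ht.1 fun s hs =>
      (one_div_pos.2 (hXpos s ⟨hs.1, hs.2.trans ht.2⟩)).le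
  linarith [hXeq t ht]

/-- Path-by-path uniqueness for the Bessel-type equation
`Z t = x₀ + ∫₀ᵗ 1/Zₛ ds + B t` among strictly positive continuous solutions,
together with the lower bound `X t ≥ x₀ + B t`. -/
theorem stmt11 (B : ℝ → ℝ) (hB : ContinuousOn B (Icc 0 1)) (hB0 : B 0 = 0)
    (x₀ : ℝ) (hx₀ : 0 < x₀) (X Y : ℝ → ℝ)
    (hXc : ContinuousOn X (Icc 0 1)) (hYc : ContinuousOn Y (Icc 0 1))
    (hX0 : X 0 = x₀) (hY0 : Y 0 = x₀)
    (hXpos : ∀ t ∈ Icc (0:ℝ) 1, 0 < X t)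
    (hYpos : ∀ t ∈ Icc (0:ℝ) 1, 0 < Y t)
    (hXeq : ∀ t ∈ Icc (0:ℝ) 1, X t = x₀ + (∫ s in (0:ℝ)..t, 1 / X s) + B t)
    (hYeq : ∀ t ∈ Icc (0:ℝ) 1, Y t = x₀ + (∫ s in (0:ℝ)..t, 1 / Y s) + B t) :
    (∀ t ∈ Icc (0:ℝ) 1, X t = Y t) ∧
    (∀ t ∈ Icc (0:ℝ) 1, x₀ + B t ≤ X t) :=
  stmt11_general B x₀ X Y hXc hYc hXpos hYpos hXeq hYeq
end

section
/- Let b : (0,∞) → ℝ be non-increasing and B : [0,T] → ℝ continuous. If X, Y : [0,T] → (0,∞) are continuous and satisfy Z_t = Z_0 + ∫_0^t b(Z_s) ds + B_t for Z ∈ {X, Y} with X_0 = Y_0, then X_t = Y_t for all t ∈ [0,T]. -/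
open Set MeasureTheory

/-!
The difference `D = X - Y` is an indefinite integral of `g = b ∘ X - b ∘ Y`, and `g ≤ 0` wherever
`D > 0` because `b` is non-increasing. If `s₀` is the last point of `[0, t]` with `D s₀ ≤ 0`, then
`D t = D s₀ + ∫ s₀..t, g ≤ 0`. Exchanging `X` and `Y` gives equality.
-/

theorem nonpos_of_eq_add_integral_of_nonpos_of_pos {D g : ℝ → ℝ} {a t : ℝ} (hat : a ≤ t)
    (hD : ContinuousOn D (Icc a t)) (hg : IntegrableOn g (Icc a t))
    (hDg : ∀ u ∈ Icc a t, D u = D a + ∫ v in a..u, g v)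
    (ha : D a ≤ 0) (hgD : ∀ u ∈ Icc a t, 0 < D u → g u ≤ 0) :
    D t ≤ 0 := by
  set S := Icc a t ∩ D ⁻¹' Iic 0
  have hS_closed : IsClosed S := hD.preimage_isClosed_of_isClosed isClosed_Icc isClosed_Iic
  have hS_bdd : BddAbove S := bddAbove_Icc.mono inter_subset_left
  obtain ⟨⟨has₀, hs₀t⟩, hDs₀⟩ : sSup S ∈ S :=
    hS_closed.csSup_mem ⟨a, left_mem_Icc.2 hat, ha⟩ hS_bdd
  set s₀ := sSup S
  have hpos : ∀ u ∈ Ioc s₀ t, 0 < D u := fun u hu => by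
    by_contra! hDu
    exact hu.1.not_ge (le_csSup hS_bdd ⟨⟨has₀.trans hu.1.le, hu.2⟩, hDu⟩)
  have hg_on : ∀ u ∈ Icc a t, IntervalIntegrable g volume a u := fun u hu =>
    (intervalIntegrable_iff_integrableOn_Icc_of_le hu.1).2 (hg.mono_set (Icc_subset_Icc_right hu.2))
  have hincr : D t = D s₀ + ∫ v in s₀..t, g v := by
    rw [hDg t (right_mem_Icc.2 hat), hDg s₀ ⟨has₀, hs₀t⟩,
      ← intervalIntegral.integral_interval_sub_left (hg_on t (right_mem_Icc.2 hat))
        (hg_on s₀ ⟨has₀, hs₀t⟩)]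
    ring
  have hint : ∫ v in s₀..t, g v ≤ 0 := by
    rw [intervalIntegral.integral_of_le hs₀t]
    exact setIntegral_nonpos measurableSet_Ioc fun u hu =>
      hgD u ⟨has₀.trans hu.1.le, hu.2⟩ (hpos u hu)
  rw [hincr]
  exact add_nonpos hDs₀ hint

theorem le_of_antitoneOn_drift {b B X Y : ℝ → ℝ} {T : ℝ} (hb : AntitoneOn b (Ioi 0))
    (hXc : ContinuousOn X (Icc 0 T)) (hYc : ContinuousOn Y (Icc 0 T))
    (hXpos : ∀ t ∈ Icc (0:ℝ) T, 0 < X t) (hYpos : ∀ t ∈ Icc (0:ℝ) T, 0 < Y t)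
    (hXint : IntegrableOn (fun s => b (X s)) (Icc 0 T))
    (hYint : IntegrableOn (fun s => b (Y s)) (Icc 0 T))
    (h0 : X 0 ≤ Y 0)
    (hXeq : ∀ t ∈ Icc (0:ℝ) T, X t = X 0 + (∫ s in (0:ℝ)..t, b (X s)) + B t)
    (hYeq : ∀ t ∈ Icc (0:ℝ) T, Y t = Y 0 + (∫ s in (0:ℝ)..t, b (Y s)) + B t) :
    ∀ t ∈ Icc (0:ℝ) T, X t ≤ Y t := by
  intro t ht
  have hsub : Icc 0 t ⊆ Icc 0 T := Icc_subset_Icc_right ht.2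
  have hint_on : ∀ {f : ℝ → ℝ}, IntegrableOn f (Icc 0 T) → ∀ u ∈ Icc 0 t,
      IntervalIntegrable f volume 0 u := fun hf u hu =>
    (intervalIntegrable_iff_integrableOn_Icc_of_le hu.1).2
      (hf.mono_set ((Icc_subset_Icc_right hu.2).trans hsub))
  suffices X t - Y t ≤ 0 by linarith
  refine nonpos_of_eq_add_integral_of_nonpos_of_pos (D := fun s => X s - Y s)
    (g := fun s => b (X s) - b (Y s)) ht.1 ((hXc.sub hYc).mono hsub)
    ((hXint.sub hYint).mono_set hsub) (fun u hu => ?_) (sub_nonpos.2 h0) (fun u hu hpos => ?_)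
  · rw [intervalIntegral.integral_sub (hint_on hXint u hu) (hint_on hYint u hu)]
    linarith [hXeq u (hsub hu), hYeq u (hsub hu)]
  · exact sub_nonpos.2 (hb (hYpos u (hsub hu)) (hXpos u (hsub hu)) (sub_pos.1 hpos).le)

theorem stmt12_general (b : ℝ → ℝ) (hb : AntitoneOn b (Ioi 0))
    (T : ℝ) (B : ℝ → ℝ)
    (X Y : ℝ → ℝ)
    (hXc : ContinuousOn X (Icc 0 T)) (hYc : ContinuousOn Y (Icc 0 T))
    (hXpos : ∀ t ∈ Icc (0:ℝ) T, 0 < X t)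
    (hYpos : ∀ t ∈ Icc (0:ℝ) T, 0 < Y t)
    (hXint : IntegrableOn (fun s => b (X s)) (Icc 0 T))
    (hYint : IntegrableOn (fun s => b (Y s)) (Icc 0 T))
    (h0 : X 0 = Y 0)
    (hXeq : ∀ t ∈ Icc (0:ℝ) T, X t = X 0 + (∫ s in (0:ℝ)..t, b (X s)) + B t)
    (hYeq : ∀ t ∈ Icc (0:ℝ) T, Y t = Y 0 + (∫ s in (0:ℝ)..t, b (Y s)) + B t) :
    ∀ t ∈ Icc (0:ℝ) T, X t = Y t := fun t ht =>
  le_antisymm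
    (le_of_antitoneOn_drift hb hXc hYc hXpos hYpos hXint hYint h0.le hXeq hYeq t ht)
    (le_of_antitoneOn_drift hb hYc hXc hYpos hXpos hYint hXint h0.ge hYeq hXeq t ht)

/-- Deterministic uniqueness for ODEs with non-increasing drift perturbed by a
fixed continuous path: if `b` is non-increasing on `(0, ∞)` and `X, Y` are
continuous strictly positive solutions of `Z t = Z 0 + ∫₀ᵗ b (Z s) ds + B t`
on `[0, T]` with the same initial value, then `X = Y` on `[0, T]`. -/
theorem stmt12 (b : ℝ → ℝ) (hb : AntitoneOn b (Ioi 0))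
    (T : ℝ) (hT : 0 ≤ T) (B : ℝ → ℝ) (hB : ContinuousOn B (Icc 0 T))
    (X Y : ℝ → ℝ)
    (hXc : ContinuousOn X (Icc 0 T)) (hYc : ContinuousOn Y (Icc 0 T))
    (hXpos : ∀ t ∈ Icc (0:ℝ) T, 0 < X t)
    (hYpos : ∀ t ∈ Icc (0:ℝ) T, 0 < Y t)
    (hXint : IntegrableOn (fun s => b (X s)) (Icc 0 T))
    (hYint : IntegrableOn (fun s => b (Y s)) (Icc 0 T))
    (h0 : X 0 = Y 0)
    (hXeq : ∀ t ∈ Icc (0:ℝ) T, X t = X 0 + (∫ s in (0:ℝ)..t, b (X s)) + B t)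
    (hYeq : ∀ t ∈ Icc (0:ℝ) T, Y t = Y 0 + (∫ s in (0:ℝ)..t, b (Y s)) + B t) :
    ∀ t ∈ Icc (0:ℝ) T, X t = Y t :=
  stmt12_general b hb T B X Y hXc hYc hXpos hYpos hXint hYint h0 hXeq hYeq
end
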